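/- arXiv:2207.01024 — 3 statements merged into one kernel-verified Lean document; each statement's English description precedes it below -/
import Mathlib

section
/- Let P be a shape-invariant predicate on subsets of V. If R, R' ⊆ V both satisfy P, |R| = |R'|, and R and R' have the same shape, then there is a TJ(P)-sequence from R to R' of length exactly |R ∖ R'| in which every set in the sequence has the same shape as R. -/
/-! Shapes framework: `V` is a finite type partitioned into types `Vp 0, …, Vp (t-1)`;
`q ≥ 1` is a fixed integer. A shape is a function `Fin t → Option ℕ`, where `none`
represents the symbol ⊤. -/

variable {α : Type*} [DecidableEq α] [Fintype α]

/-- The partition of the vertex set into `t` pairwise disjoint nonempty types. -/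
def IsTypePartition {t : ℕ} (Vp : Fin t → Finset α) : Prop :=
  (∀ i, (Vp i).Nonempty) ∧ (∀ i j, i ≠ j → Disjoint (Vp i) (Vp j)) ∧
    (∀ v : α, ∃ i, v ∈ Vp i)

/-- The signature of a set `X`: `sig Vp X i = |V_i ∩ X|`. -/
def sig {t : ℕ} (Vp : Fin t → Finset α) (X : Finset α) (i : Fin t) : ℕ :=
  ((Vp i) ∩ X).card

/-- The (unique) shape of a set `X`: it is `⊤` (i.e. `none`) at `i` when
`q ≤ |V_i ∩ X| ≤ |V_i| − q`, and `|V_i ∩ X|` otherwise.  A set `X` has shape `σ`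
iff `shapeOf q Vp X = σ`. -/
def shapeOf {t : ℕ} (q : ℕ) (Vp : Fin t → Finset α) (X : Finset α) (i : Fin t) : Option ℕ :=
  if q ≤ sig Vp X i ∧ sig Vp X i ≤ (Vp i).card - q then none else some (sig Vp X i)

/-- A predicate on subsets of `V` is shape-invariant if any two subsets with the same
shape either both satisfy it or both fail it. -/
def ShapeInvariant {t : ℕ} (q : ℕ) (Vp : Fin t → Finset α) (P : Finset α → Prop) : Prop :=
  ∀ X Y : Finset α, shapeOf q Vp X = shapeOf q Vp Y → (P X ↔ P Y)

/-- `TJSeq P seq ℓ S S'` : the sequence `seq 0, …, seq ℓ` is a TJ(P)-sequence from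
`S` to `S'` (of length `ℓ`): consecutive sets differ by a single token jump and
all sets satisfy `P`. -/
def TJSeq (P : Finset α → Prop) (seq : ℕ → Finset α) (ℓ : ℕ) (S S' : Finset α) : Prop :=
  seq 0 = S ∧ seq ℓ = S' ∧ (∀ i ≤ ℓ, P (seq i)) ∧
    ∀ i < ℓ, (seq i \ seq (i + 1)).card = 1 ∧ (seq (i + 1) \ seq i).card = 1

/-! As long as `R ≠ R'`, equal cardinalities let a token of `R ∖ R'` jump to `R' ∖ R` so that
every signature stays between those of `R` and `R'`: inside one type if some type holds tokens of
both, otherwise from a type where `R` has more tokens than `R'` to one where it has fewer. A type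
where the signatures of `R` and `R'` differ is `⊤` in their common shape, and so is every value in
between, so each jump preserves the shape; shape-invariance then carries `P` along. -/

section

variable {V : Type*}

theorem IsTypePartition.mem_iff_eq {t : ℕ} {Vp : Fin t → Finset V} (hVp : IsTypePartition Vp)
    {v : V} {i : Fin t} (hv : v ∈ Vp i) (k : Fin t) : v ∈ Vp k ↔ k = i := by
  refine ⟨fun hk => ?_, fun hk => hk ▸ hv⟩
  by_contra hki
  exact Finset.disjoint_left.mp (hVp.2.1 k i hki) hk hv

variable [DecidableEq V]

theorem IsTypePartition.sum_sig {t : ℕ} {Vp : Fin t → Finset V} (hVp : IsTypePartition Vp)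
    (X : Finset V) : ∑ i, sig Vp X i = X.card := by
  have hX : X = Finset.univ.biUnion (fun i => Vp i ∩ X) := by
    ext v
    simpa using fun _ => hVp.2.2 v
  conv_rhs => rw [hX]
  refine (Finset.card_biUnion fun i _ j _ hij => ?_).symm
  exact (hVp.2.1 i j hij).mono Finset.inter_subset_left Finset.inter_subset_left

theorem sig_insert_erase_add {t : ℕ} (Vp : Fin t → Finset V) {X : Finset V} {x y : V}
    (hx : x ∈ X) (hy : y ∉ X) (k : Fin t) :
    sig Vp (insert y (X.erase x)) k + (if x ∈ Vp k then 1 else 0)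
      = sig Vp X k + (if y ∈ Vp k then 1 else 0) := by
  have hinsert : sig Vp (insert y (X.erase x)) k
      = (Vp k ∩ X.erase x).card + if y ∈ Vp k then 1 else 0 := by
    unfold sig
    split_ifs with hyk
    · have hyX : y ∉ Vp k ∩ X.erase x := fun h =>
        hy (Finset.mem_of_mem_erase (Finset.mem_inter.mp h).2)
      rw [Finset.inter_insert_of_mem hyk, Finset.card_insert_of_notMem hyX]
    · rw [Finset.inter_insert_of_notMem hyk, add_zero]
  have herase : (Vp k ∩ X.erase x).card + (if x ∈ Vp k then 1 else 0) = sig Vp X k := by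
    rw [Finset.inter_erase]
    split_ifs with hxk
    · exact Finset.card_erase_add_one (Finset.mem_inter.mpr ⟨hxk, hx⟩)
    · rw [Finset.erase_eq_of_notMem fun h => hxk (Finset.mem_inter.mp h).1, add_zero]; rfl
  omega

theorem shapeOf_eq_of_sig_mem_uIcc {t q : ℕ} {Vp : Fin t → Finset V} {X Y Z : Finset V}
    (hXY : shapeOf q Vp X = shapeOf q Vp Y)
    (hZ : ∀ k, sig Vp Z k ∈ Set.uIcc (sig Vp X k) (sig Vp Y k)) :
    shapeOf q Vp Z = shapeOf q Vp X := by
  funext k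
  have hk := congrFun hXY k
  have hZk := Set.mem_uIcc.mp (hZ k)
  unfold shapeOf at hk ⊢
  split_ifs at hk ⊢ <;> simp_all <;> omega

theorem sdiff_insert_erase {X : Finset V} {x y : V} (hx : x ∈ X) (hy : y ∉ X) :
    X \ insert y (X.erase x) = {x} := by
  grind

theorem insert_erase_sdiff {X : Finset V} {x y : V} (hy : y ∉ X) :
    insert y (X.erase x) \ X = {y} := by
  grind

theorem exists_jump_shapeOf_eq {t q : ℕ} {Vp : Fin t → Finset V} (hVp : IsTypePartition Vp)
    {X Y : Finset V} (hshape : shapeOf q Vp X = shapeOf q Vp Y) (hcard : X.card = Y.card)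
    (hne : (X \ Y).Nonempty) :
    ∃ x ∈ X \ Y, ∃ y ∈ Y \ X, shapeOf q Vp (insert y (X.erase x)) = shapeOf q Vp X := by
  obtain ⟨x, hxXY⟩ := hne
  obtain ⟨hxX, hxY⟩ := Finset.mem_sdiff.mp hxXY
  obtain ⟨i, hxi⟩ := hVp.2.2 x
  suffices ∃ y ∈ Y \ X, ∀ k,
      sig Vp (insert y (X.erase x)) k ∈ Set.uIcc (sig Vp X k) (sig Vp Y k) by
    obtain ⟨y, hy, hbetween⟩ := this
    exact ⟨x, hxXY, y, hy, shapeOf_eq_of_sig_mem_uIcc hshape hbetween⟩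
  by_cases hsame : ∃ y ∈ Y \ X, y ∈ Vp i
  · obtain ⟨y, hy, hyi⟩ := hsame
    refine ⟨y, hy, fun k => Set.mem_uIcc.mpr ?_⟩
    have hsig := sig_insert_erase_add Vp hxX (Finset.mem_sdiff.mp hy).2 k
    simp only [hVp.mem_iff_eq hxi, hVp.mem_iff_eq hyi] at hsig
    omega
  · -- no type-`i` token of `Y` is missing from `X`, so `X` has more type-`i` tokens than `Y`
    have hsub : Vp i ∩ Y ⊆ Vp i ∩ X := fun v hv => by
      obtain ⟨hvi, hvY⟩ := Finset.mem_inter.mp hv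
      by_contra hvX
      have hvX' : v ∉ X := fun h => hvX (Finset.mem_inter.mpr ⟨hvi, h⟩)
      exact hsame ⟨v, Finset.mem_sdiff.mpr ⟨hvY, hvX'⟩, hvi⟩
    have hlt : sig Vp Y i < sig Vp X i :=
      Finset.card_lt_card <| (Finset.ssubset_iff_of_subset hsub).mpr
        ⟨x, Finset.mem_inter.mpr ⟨hxi, hxX⟩, fun h => hxY (Finset.mem_inter.mp h).2⟩
    obtain ⟨j, hj⟩ : ∃ j, sig Vp X j < sig Vp Y j := by
      by_contra! hle
      refine (Finset.sum_lt_sum (fun j _ => hle j) ⟨i, Finset.mem_univ i, hlt⟩).ne ?_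
      rw [hVp.sum_sig, hVp.sum_sig, hcard]
    obtain ⟨y, hyjY, hyjX⟩ := Finset.exists_mem_notMem_of_card_lt_card hj
    obtain ⟨hyj, hyY⟩ := Finset.mem_inter.mp hyjY
    have hyX : y ∉ X := fun h => hyjX (Finset.mem_inter.mpr ⟨hyj, h⟩)
    refine ⟨y, Finset.mem_sdiff.mpr ⟨hyY, hyX⟩, fun k => Set.mem_uIcc.mpr ?_⟩
    have hsig := sig_insert_erase_add Vp hxX hyX k
    simp only [hVp.mem_iff_eq hxi, hVp.mem_iff_eq hyj] at hsig
    split_ifs at hsig <;> subst_vars <;> omega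

end

namespace TJSeq

variable {V : Type*} [DecidableEq V] {P Q : Finset V → Prop} {seq : ℕ → Finset V} {ℓ : ℕ}
  {S S' T : Finset V}

theorem refl (hS : P S) : TJSeq P (fun _ => S) 0 S S :=
  ⟨rfl, rfl, fun _ _ => hS, fun _ h => absurd h (Nat.not_lt_zero _)⟩

theorem cons (hS : P S) (hleave : (S \ S').card = 1) (henter : (S' \ S).card = 1)
    (h : TJSeq P seq ℓ S' T) : TJSeq P (fun | 0 => S | k + 1 => seq k) (ℓ + 1) S T := by
  obtain ⟨h0, hℓ, hP, hjump⟩ := h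
  refine ⟨rfl, hℓ, fun i hi => ?_, fun i hi => ?_⟩
  · cases i with
    | zero => exact hS
    | succ i => exact hP i (by omega)
  · cases i with
    | zero => subst h0; exact ⟨hleave, henter⟩
    | succ i => exact hjump i (by omega)

theorem mono (hPQ : ∀ X, P X → Q X) (h : TJSeq P seq ℓ S T) : TJSeq Q seq ℓ S T :=
  ⟨h.1, h.2.1, fun i hi => hPQ _ (h.2.2.1 i hi), h.2.2.2⟩

end TJSeq

theorem exists_tjSeq_of_exists_jump {V : Type*} [DecidableEq V] {Q : Finset V → Prop}
    {T : Finset V} (hjump : ∀ S, Q S → S.card = T.card → (S \ T).Nonempty →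
      ∃ x ∈ S \ T, ∃ y ∈ T \ S, Q (insert y (S.erase x)))
    {S : Finset V} (hS : Q S) (hcard : S.card = T.card) :
    ∃ seq, TJSeq Q seq (S \ T).card S T := by
  induction hn : (S \ T).card generalizing S with
  | zero =>
    have hST : S = T := Finset.eq_of_subset_of_card_le
      (Finset.sdiff_eq_empty_iff_subset.mp (Finset.card_eq_zero.mp hn)) hcard.ge
    subst hST
    exact ⟨_, TJSeq.refl hS⟩
  | succ n ih =>
    obtain ⟨x, hx, y, hy, hQ⟩ := hjump S hS hcard (Finset.card_pos.mp (by omega))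
    obtain ⟨hxS, hxT⟩ := Finset.mem_sdiff.mp hx
    obtain ⟨hyT, hyS⟩ := Finset.mem_sdiff.mp hy
    have hcard' : (insert y (S.erase x)).card = T.card := by
      rw [Finset.card_insert_of_notMem (fun h => hyS (Finset.mem_of_mem_erase h)),
        Finset.card_erase_add_one hxS, hcard]
    have hn' : (insert y (S.erase x) \ T).card = n := by
      rw [Finset.insert_sdiff_of_mem _ hyT, Finset.erase_sdiff_comm, Finset.card_erase_of_mem hx,
        hn, Nat.add_sub_cancel]
    obtain ⟨seq, hseq⟩ := ih hQ hcard' hn'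
    exact ⟨_, hseq.cons hS (by rw [sdiff_insert_erase hxS hyS, Finset.card_singleton])
      (by rw [insert_erase_sdiff hyS, Finset.card_singleton])⟩

theorem stmt0_general {t q : ℕ} (Vp : Fin t → Finset α)
    (hVp : IsTypePartition Vp) (P : Finset α → Prop)
    (hP : ShapeInvariant q Vp P)
    (R R' : Finset α) (hR : P R) (hcard : R.card = R'.card)
    (hshape : shapeOf q Vp R = shapeOf q Vp R') :
    ∃ seq : ℕ → Finset α, TJSeq P seq (R \ R').card R R' ∧
      ∀ i ≤ (R \ R').card, shapeOf q Vp (seq i) = shapeOf q Vp R := by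
  have hjump : ∀ S, shapeOf q Vp S = shapeOf q Vp R → S.card = R'.card → (S \ R').Nonempty →
      ∃ x ∈ S \ R', ∃ y ∈ R' \ S, shapeOf q Vp (insert y (S.erase x)) = shapeOf q Vp R := by
    intro S hS hScard hne
    obtain ⟨x, hx, y, hy, hxy⟩ := exists_jump_shapeOf_eq hVp (hS.trans hshape) hScard hne
    exact ⟨x, hx, y, hy, hxy.trans hS⟩
  obtain ⟨seq, hseq⟩ := exists_tjSeq_of_exists_jump hjump rfl hcard
  exact ⟨seq, hseq.mono fun X hX => (hP X R hX).mpr hR, hseq.2.2.1⟩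

/-- If `R, R'` both satisfy a shape-invariant predicate `P`,
have the same cardinality and the same shape, then there is a TJ(P)-sequence from
`R` to `R'` of length exactly `|R \ R'|` all of whose sets have the same shape as `R`. -/
theorem stmt0 {t q : ℕ} (hq : 1 ≤ q) (Vp : Fin t → Finset α)
    (hVp : IsTypePartition Vp) (P : Finset α → Prop)
    (hP : ShapeInvariant q Vp P)
    (R R' : Finset α) (hR : P R) (hR' : P R') (hcard : R.card = R'.card)
    (hshape : shapeOf q Vp R = shapeOf q Vp R') :
    ∃ seq : ℕ → Finset α, TJSeq P seq (R \ R').card R R' ∧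
      ∀ i ≤ (R \ R').card, shapeOf q Vp (seq i) = shapeOf q Vp R :=
  stmt0_general Vp hVp P hP R R' hR hcard hshape
end

section
/- Let P be a shape-invariant predicate on subsets of V, and let S, S' ⊆ V both satisfy P with |S| = |S'| = k, where both S and S' are unions of types (for every i ∈ {1,…,t}, either V_i ⊆ S or V_i ∩ S = ∅, and likewise for S'). Let σ̄ and σ̄' be the shapes of S and S'. Then there exists a TJ(P)-sequence from S to S' if and only if σ̄ and σ̄' belong to the same connected component of the size-k shape graph S_k. -/
/-! Shapes framework: `V` is a finite type partitioned into types `Vp 0, …, Vp (t-1)`;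
`q ≥ 1` is a fixed integer. A shape is a function `Fin t → Option ℕ`, where `none`
represents the symbol ⊤. -/

variable {α : Type*} [DecidableEq α] [Fintype α]

/-- A shape `σ` is `k`-feasible (w.r.t. `P`) if some set of cardinality `k` with
shape `σ` satisfies `P`. -/
def KFeasible {t : ℕ} (q : ℕ) (Vp : Fin t → Finset α) (P : Finset α → Prop)
    (k : ℕ) (σ : Fin t → Option ℕ) : Prop :=
  ∃ X : Finset α, X.card = k ∧ shapeOf q Vp X = σ ∧ P X

/-- Conditions A1–A3 at index `i` for the pair of shapes `(σ1, σ2)`. -/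
def Acond {t : ℕ} (q : ℕ) (Vp : Fin t → Finset α)
    (σ1 σ2 : Fin t → Option ℕ) (i : Fin t) : Prop :=
  (∃ a b, σ1 i = some a ∧ σ2 i = some b ∧ b + 1 = a) ∨
  (σ1 i = none ∧ σ2 i = some (q - 1)) ∨
  (σ1 i = some ((Vp i).card - q + 1) ∧ σ2 i = none)

/-- Conditions B1–B3 at index `j` for the pair of shapes `(σ1, σ2)`. -/
def Bcond {t : ℕ} (q : ℕ) (Vp : Fin t → Finset α)
    (σ1 σ2 : Fin t → Option ℕ) (j : Fin t) : Prop :=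
  (∃ a b, σ1 j = some a ∧ σ2 j = some b ∧ a + 1 = b) ∨
  (σ2 j = none ∧ σ1 j = some (q - 1)) ∨
  (σ2 j = some ((Vp j).card - q + 1) ∧ σ1 j = none)

/-- Condition (2) of adjacency: a witness of size `k` and shape `σ1` with the
prescribed signatures at the (possibly undefined) designated indices `oi`, `oj`. -/
def Cond2 {t : ℕ} (q : ℕ) (Vp : Fin t → Finset α) (k : ℕ)
    (σ1 : Fin t → Option ℕ) (oi oj : Option (Fin t)) : Prop :=
  ∃ S1 : Finset α, S1.card = k ∧ shapeOf q Vp S1 = σ1 ∧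
    (∀ i, oi = some i → σ1 i = none → sig Vp S1 i = q) ∧
    (∀ j, oj = some j → σ1 j = none → sig Vp S1 j = (Vp j).card - q)

/-- Condition (3) of adjacency: a witness of size `k` and shape `σ2` with the
prescribed signatures at the (possibly undefined) designated indices `oi`, `oj`. -/
def Cond3 {t : ℕ} (q : ℕ) (Vp : Fin t → Finset α) (k : ℕ)
    (σ2 : Fin t → Option ℕ) (oi oj : Option (Fin t)) : Prop :=
  ∃ S2 : Finset α, S2.card = k ∧ shapeOf q Vp S2 = σ2 ∧
    (∀ i, oi = some i → σ2 i = none → sig Vp S2 i = (Vp i).card - q) ∧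
    (∀ j, oj = some j → σ2 j = none → sig Vp S2 j = q)

/-- The adjacency conditions (1)–(3) for two shapes: either they disagree at exactly
two indices `i` (satisfying A1–A3) and `j` (satisfying B1–B3), or they disagree at
exactly one index, which satisfies A1–A3 (called `i`) or B1–B3 (called `j`);
in all cases the witnesses required by conditions (2) and (3) exist. -/
def ShapeAdj {t : ℕ} (q : ℕ) (Vp : Fin t → Finset α) (k : ℕ)
    (σ1 σ2 : Fin t → Option ℕ) : Prop :=
  (∃ i j : Fin t, i ≠ j ∧ (∀ h, σ1 h ≠ σ2 h ↔ (h = i ∨ h = j)) ∧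
    Acond q Vp σ1 σ2 i ∧ Bcond q Vp σ1 σ2 j ∧
    Cond2 q Vp k σ1 (some i) (some j) ∧ Cond3 q Vp k σ2 (some i) (some j)) ∨
  (∃ i : Fin t, (∀ h, σ1 h ≠ σ2 h ↔ h = i) ∧ Acond q Vp σ1 σ2 i ∧
    Cond2 q Vp k σ1 (some i) none ∧ Cond3 q Vp k σ2 (some i) none) ∨
  (∃ j : Fin t, (∀ h, σ1 h ≠ σ2 h ↔ h = j) ∧ Bcond q Vp σ1 σ2 j ∧
    Cond2 q Vp k σ1 none (some j) ∧ Cond3 q Vp k σ2 none (some j))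

/-- Adjacency in the size-`k` shape graph `S_k`: the vertices are the `k`-feasible
shapes, and two distinct vertices are joined iff the adjacency conditions hold. -/
def GraphAdj {t : ℕ} (q : ℕ) (Vp : Fin t → Finset α) (P : Finset α → Prop)
    (k : ℕ) (σ1 σ2 : Fin t → Option ℕ) : Prop :=
  σ1 ≠ σ2 ∧ KFeasible q Vp P k σ1 ∧ KFeasible q Vp P k σ2 ∧ ShapeAdj q Vp k σ1 σ2

/-! A token jump moves one element of `V_i` to `V_j`, so it changes the signature by `-e_i + e_j`
(or not at all when `i = j`); if it changes the shape, the two sets themselves witness the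
adjacency of their shapes. For the converse, the key observation is that the shape entry of a
type, as a function of its count, is constant on every interval whose endpoints have the same
entry. Hence two sets `X ≠ Y` of equal size and shape are TJ-connected inside that shape: jump
an element of `X \ Y` of type `i` either to `(Y \ X) ∩ V_i`, or, if `X` has more elements of
type `i` than `Y`, to `(Y \ X) ∩ V_j` for a type `j` where `Y` has more, so that both counts move
towards those of `Y`. An adjacency `σ₁ ∼ σ₂` is realized by one jump from the witness `S₁` of
condition (2) towards the witness `S₂` of condition (3); when only one index is prescribed, the
other is a type where `S₁` and `S₂` differ in the compensating direction, which exists because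
`|S₁| = |S₂|`. -/

open Finset Relation

namespace Finset

variable {α : Type*} [DecidableEq α]

theorem exists_sdiff_eq_singleton_and_sdiff_eq_singleton {A : Finset α} {v w : α}
    (hv : v ∈ A) (hw : w ∉ A) : ∃ B, A \ B = {v} ∧ B \ A = {w} := by
  refine ⟨insert w (A.erase v), ?_, ?_⟩ <;> ext x <;>
    simp only [mem_sdiff, mem_insert, mem_erase, mem_singleton] <;> grind

theorem card_inter_add_card_inter_sdiff (s A B : Finset α) :
    #(s ∩ B) + #(s ∩ (A \ B)) = #(s ∩ A) + #(s ∩ (B \ A)) := by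
  rw [← card_union_of_disjoint, ← card_union_of_disjoint]
  · congr 1; ext; simp only [mem_union, mem_inter, mem_sdiff]; tauto
  all_goals exact disjoint_left.2 fun x h1 h2 => by simp_all

theorem exists_lt_of_sum_eq_of_lt {ι : Type*} [Fintype ι] {f g : ι → ℕ}
    (hsum : ∑ i, f i = ∑ i, g i) {i : ι} (hi : g i < f i) : ∃ j, f j < g j := by
  by_contra! hle
  exact (sum_lt_sum (fun j _ => hle j) ⟨i, mem_univ i, hi⟩).ne hsum.symm

end Finset

section TokenJumping

variable {α : Type*} [DecidableEq α]

def TJStep (P : Finset α → Prop) (A B : Finset α) : Prop :=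
  P A ∧ P B ∧ #(A \ B) = 1 ∧ #(B \ A) = 1

theorem TJStep.card_eq {P : Finset α → Prop} {A B : Finset α} (h : TJStep P A B) :
    #A = #B :=
  card_sdiff_eq_card_sdiff_iff.1 (h.2.2.1.trans h.2.2.2.symm)

theorem exists_tjSeq_iff {P : Finset α → Prop} {S S' : Finset α} :
    (∃ seq ℓ, TJSeq P seq ℓ S S') ↔ P S ∧ ReflTransGen (TJStep P) S S' := by
  constructor
  · rintro ⟨seq, ℓ, rfl, rfl, hP, hjump⟩
    refine ⟨hP 0 ℓ.zero_le, ?_⟩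
    suffices ∀ n ≤ ℓ, ReflTransGen (TJStep P) (seq 0) (seq n) from this ℓ le_rfl
    intro n hn
    induction n with
    | zero => exact .refl
    | succ n ih => exact (ih (by omega)).tail ⟨hP n (by omega), hP (n + 1) hn, hjump n hn⟩
  · rintro ⟨hS, h⟩
    induction h with
    | refl => exact ⟨fun _ => S, 0, rfl, rfl, fun _ _ => hS, fun _ h => absurd h (by omega)⟩
    | @tail A B _ hAB ih =>
      obtain ⟨seq, ℓ, h0, hℓ, hP, hjump⟩ := ih
      refine ⟨fun n => if n ≤ ℓ then seq n else B, ℓ + 1, by simpa using h0, by simp, ?_, ?_⟩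
      · intro n _
        dsimp only
        split_ifs with hn
        exacts [hP n hn, hAB.2.1]
      · intro n hn
        obtain hn | rfl := Nat.lt_or_eq_of_le (Nat.le_of_lt_succ hn)
        · simpa [hn.le, Nat.succ_le_of_lt hn] using hjump n hn
        · simpa [hℓ] using hAB.2.2

end TokenJumping

def cellShape (q c n : ℕ) : Option ℕ := if q ≤ n ∧ n ≤ c - q then none else some n

theorem cellShape_eq_of_between {q c m n p : ℕ} (h : cellShape q c m = cellShape q c n)
    (hp : min m n ≤ p ∧ p ≤ max m n) : cellShape q c p = cellShape q c n := by
  unfold cellShape at *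
  split_ifs at * <;> simp_all <;> omega

section Types

variable {α : Type*} [DecidableEq α] {t q : ℕ} {Vp : Fin t → Finset α}

theorem shapeOf_apply (X : Finset α) (i : Fin t) :
    shapeOf q Vp X i = cellShape q (Vp i).card (sig Vp X i) := rfl

theorem shapeOf_eq_of_between {A B C : Finset α}
    (hsig : ∀ h, min (sig Vp A h) (sig Vp C h) ≤ sig Vp B h ∧
      sig Vp B h ≤ max (sig Vp A h) (sig Vp C h))
    (hshape : ∀ h, shapeOf q Vp A h = shapeOf q Vp C h ∨ sig Vp B h = sig Vp C h) :
    shapeOf q Vp B = shapeOf q Vp C := by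
  funext h
  obtain hAC | hBC := hshape h
  · exact cellShape_eq_of_between hAC (hsig h)
  · rw [shapeOf_apply, hBC, shapeOf_apply]

theorem sig_add_sig_sdiff (A B : Finset α) (i : Fin t) :
    sig Vp B i + sig Vp (A \ B) i = sig Vp A i + sig Vp (B \ A) i :=
  card_inter_add_card_inter_sdiff _ _ _

theorem exists_mem_of_sig_pos {X : Finset α} {i : Fin t} (h : 0 < sig Vp X i) :
    ∃ w ∈ X, w ∈ Vp i := by
  obtain ⟨w, hw⟩ := card_pos.1 h
  exact ⟨w, (mem_inter.1 hw).2, (mem_inter.1 hw).1⟩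

theorem exists_mem_sdiff_of_sig_lt {A B : Finset α} {i : Fin t}
    (h : sig Vp A i < sig Vp B i) : ∃ w ∈ B \ A, w ∈ Vp i :=
  exists_mem_of_sig_pos (by have := sig_add_sig_sdiff (Vp := Vp) A B i; omega)

theorem exists_mem_sdiff_of_sig_le {A B : Finset α} {i : Fin t} {v : α}
    (h : sig Vp A i ≤ sig Vp B i) (hv : v ∈ A \ B) (hvi : v ∈ Vp i) :
    ∃ w ∈ B \ A, w ∈ Vp i := by
  have hpos : 0 < sig Vp (A \ B) i := card_pos.2 ⟨v, mem_inter.2 ⟨hvi, hv⟩⟩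
  exact exists_mem_of_sig_pos (by have := sig_add_sig_sdiff (Vp := Vp) A B i; omega)

end Types

namespace IsTypePartition

variable {α : Type*} {t : ℕ} {Vp : Fin t → Finset α}

theorem eq_of_mem (hVp : IsTypePartition Vp) {v : α} {i h : Fin t} (hvi : v ∈ Vp i)
    (hvh : v ∈ Vp h) : h = i := by
  by_contra hne
  exact disjoint_left.1 (hVp.2.1 h i hne) hvh hvi

variable [DecidableEq α]

theorem sig_singleton (hVp : IsTypePartition Vp) {v : α} {i : Fin t} (hvi : v ∈ Vp i)
    (h : Fin t) : sig Vp {v} h = if h = i then 1 else 0 := by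
  unfold sig
  split_ifs with hh
  · simp [hh, hvi]
  · simp [inter_singleton_of_notMem fun hvh => hh (hVp.eq_of_mem hvi hvh)]

theorem card_eq_sum_sig (hVp : IsTypePartition Vp) (X : Finset α) :
    #X = ∑ i, sig Vp X i := by
  unfold sig
  rw [← card_biUnion]
  · congr 1
    ext v
    obtain ⟨i, hvi⟩ := hVp.2.2 v
    simp only [mem_biUnion, mem_univ, mem_inter, true_and]
    exact ⟨fun hv => ⟨i, hvi, hv⟩, fun ⟨_, _, hv⟩ => hv⟩
  · exact fun i _ j _ hij => (hVp.2.1 i j hij).mono inter_subset_left inter_subset_left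

theorem sig_add_ite_of_sdiff (hVp : IsTypePartition Vp) {A B : Finset α} {v w : α}
    {i j : Fin t} (hAB : A \ B = {v}) (hBA : B \ A = {w}) (hvi : v ∈ Vp i) (hwj : w ∈ Vp j)
    (h : Fin t) :
    sig Vp B h + (if h = i then 1 else 0) = sig Vp A h + (if h = j then 1 else 0) := by
  rw [← hVp.sig_singleton hvi, ← hVp.sig_singleton hwj, ← hAB, ← hBA]
  exact sig_add_sig_sdiff A B h

theorem sig_between_of_sdiff (hVp : IsTypePartition Vp) {A B C : Finset α} {v w : α}
    {i j : Fin t} (hAB : A \ B = {v}) (hBA : B \ A = {w}) (hvi : v ∈ Vp i) (hwj : w ∈ Vp j)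
    (hij : i = j ∨ sig Vp C i < sig Vp A i ∧ sig Vp A j < sig Vp C j) (h : Fin t) :
    min (sig Vp A h) (sig Vp C h) ≤ sig Vp B h ∧ sig Vp B h ≤ max (sig Vp A h) (sig Vp C h) := by
  have := hVp.sig_add_ite_of_sdiff hAB hBA hvi hwj h
  split_ifs at this <;> subst_vars <;> omega

end IsTypePartition

section Adjacency

variable {α : Type*} {t q : ℕ} {Vp : Fin t → Finset α}

theorem bcond_iff_acond_swap {σ1 σ2 : Fin t → Option ℕ} {j : Fin t} :
    Bcond q Vp σ1 σ2 j ↔ Acond q Vp σ2 σ1 j := by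
  unfold Acond Bcond
  constructor
  · rintro (⟨a, b, h1, h2, hab⟩ | h | h)
    exacts [Or.inl ⟨b, a, h2, h1, hab⟩, Or.inr (Or.inl h), Or.inr (Or.inr h)]
  · rintro (⟨a, b, h1, h2, hab⟩ | h | h)
    exacts [Or.inl ⟨b, a, h2, h1, hab⟩, Or.inr (Or.inl h), Or.inr (Or.inr h)]

variable [DecidableEq α]

theorem sig_eq_succ_of_acond (hq : 1 ≤ q) {A B : Finset α} {i : Fin t}
    (hA : Acond q Vp (shapeOf q Vp A) (shapeOf q Vp B) i)
    (hAi : shapeOf q Vp A i = none → sig Vp A i = q)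
    (hBi : shapeOf q Vp B i = none → sig Vp B i = (Vp i).card - q) :
    sig Vp A i = sig Vp B i + 1 := by
  simp only [Acond, shapeOf_apply, cellShape] at *
  split_ifs at * <;> simp_all

theorem acond_of_sig_eq_succ {A B : Finset α} {i : Fin t}
    (h : sig Vp A i = sig Vp B i + 1) (hne : shapeOf q Vp A i ≠ shapeOf q Vp B i) :
    Acond q Vp (shapeOf q Vp A) (shapeOf q Vp B) i ∧
      (shapeOf q Vp A i = none → sig Vp A i = q) ∧
      (shapeOf q Vp B i = none → sig Vp B i = (Vp i).card - q) := by
  simp only [Acond, shapeOf_apply, cellShape, h] at *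
  split_ifs at * <;> simp_all <;> omega

theorem sig_eq_succ_of_bcond (hq : 1 ≤ q) {A B : Finset α} {j : Fin t}
    (hB : Bcond q Vp (shapeOf q Vp A) (shapeOf q Vp B) j)
    (hAj : shapeOf q Vp A j = none → sig Vp A j = (Vp j).card - q)
    (hBj : shapeOf q Vp B j = none → sig Vp B j = q) :
    sig Vp B j = sig Vp A j + 1 :=
  sig_eq_succ_of_acond hq (bcond_iff_acond_swap.1 hB) hBj hAj

theorem bcond_of_sig_eq_succ {A B : Finset α} {j : Fin t}
    (h : sig Vp B j = sig Vp A j + 1) (hne : shapeOf q Vp A j ≠ shapeOf q Vp B j) :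
    Bcond q Vp (shapeOf q Vp A) (shapeOf q Vp B) j ∧
      (shapeOf q Vp A j = none → sig Vp A j = (Vp j).card - q) ∧
      (shapeOf q Vp B j = none → sig Vp B j = q) :=
  let ⟨hB, hBj, hAj⟩ := acond_of_sig_eq_succ h (Ne.symm hne)
  ⟨bcond_iff_acond_swap.2 hB, hAj, hBj⟩

theorem shapeAdj_of_sig {k : ℕ} {A B : Finset α} {i j : Fin t} (hij : i ≠ j)
    (hA : #A = k) (hB : #B = k)
    (hi : sig Vp A i = sig Vp B i + 1) (hj : sig Vp B j = sig Vp A j + 1)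
    (hother : ∀ h, h ≠ i → h ≠ j → sig Vp B h = sig Vp A h)
    (hne : shapeOf q Vp A ≠ shapeOf q Vp B) :
    ShapeAdj q Vp k (shapeOf q Vp A) (shapeOf q Vp B) := by
  have hdiff : ∀ h, shapeOf q Vp A h ≠ shapeOf q Vp B h → h = i ∨ h = j := by
    intro h hh
    by_contra! hij'
    exact hh (by rw [shapeOf_apply, shapeOf_apply, hother h hij'.1 hij'.2])
  by_cases di : shapeOf q Vp A i = shapeOf q Vp B i <;>
    by_cases dj : shapeOf q Vp A j = shapeOf q Vp B j
  · refine absurd (funext fun h => ?_) hne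
    by_contra hh
    rcases hdiff h hh with rfl | rfl
    exacts [hh di, hh dj]
  · obtain ⟨hBc, hAj, hBj⟩ := bcond_of_sig_eq_succ hj dj
    refine Or.inr (Or.inr ⟨j, fun h => ⟨fun hh => ?_, by rintro rfl; exact dj⟩, hBc,
      ⟨A, hA, rfl, nofun, by rintro _ ⟨⟩; exact hAj⟩,
      ⟨B, hB, rfl, nofun, by rintro _ ⟨⟩; exact hBj⟩⟩)
    exact (hdiff h hh).resolve_left (by rintro rfl; exact hh di)
  · obtain ⟨hAc, hAi, hBi⟩ := acond_of_sig_eq_succ hi di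
    refine Or.inr (Or.inl ⟨i, fun h => ⟨fun hh => ?_, by rintro rfl; exact di⟩, hAc,
      ⟨A, hA, rfl, by rintro _ ⟨⟩; exact hAi, nofun⟩,
      ⟨B, hB, rfl, by rintro _ ⟨⟩; exact hBi, nofun⟩⟩)
    exact (hdiff h hh).resolve_right (by rintro rfl; exact hh dj)
  · obtain ⟨hAc, hAi, hBi⟩ := acond_of_sig_eq_succ hi di
    obtain ⟨hBc, hAj, hBj⟩ := bcond_of_sig_eq_succ hj dj
    exact Or.inl ⟨i, j, hij, fun h => ⟨hdiff h, by rintro (rfl | rfl) <;> assumption⟩, hAc, hBc,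
      ⟨A, hA, rfl, by rintro _ ⟨⟩; exact hAi, by rintro _ ⟨⟩; exact hAj⟩,
      ⟨B, hB, rfl, by rintro _ ⟨⟩; exact hBi, by rintro _ ⟨⟩; exact hBj⟩⟩

end Adjacency

section Reconfiguration

variable {α : Type*} [DecidableEq α] {t q k : ℕ} {Vp : Fin t → Finset α}
  {P : Finset α → Prop}

theorem reflTransGen_graphAdj_of_tjStep (hVp : IsTypePartition Vp) {A B : Finset α}
    (hAB : TJStep P A B) (hk : #A = k) :
    ReflTransGen (GraphAdj q Vp P k) (shapeOf q Vp A) (shapeOf q Vp B) := by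
  have hkB : #B = k := hAB.card_eq ▸ hk
  obtain ⟨v, hv⟩ := card_eq_one.1 hAB.2.2.1
  obtain ⟨w, hw⟩ := card_eq_one.1 hAB.2.2.2
  obtain ⟨i, hvi⟩ := hVp.2.2 v
  obtain ⟨j, hwj⟩ := hVp.2.2 w
  have hsig := hVp.sig_add_ite_of_sdiff hv hw hvi hwj
  by_cases hs : shapeOf q Vp A = shapeOf q Vp B
  · rw [hs]
  have hij : i ≠ j := by
    rintro rfl
    exact hs (funext fun h => by rw [shapeOf_apply, shapeOf_apply, add_right_cancel (hsig h)])
  refine .single ⟨hs, ⟨A, hk, rfl, hAB.1⟩, ⟨B, hkB, rfl, hAB.2.1⟩,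
    shapeAdj_of_sig hij hk hkB ?_ ?_ ?_ hs⟩
  · simpa [hij] using (hsig i).symm
  · simpa [hij.symm] using hsig j
  · intro h hi hj
    simpa [hi, hj] using hsig h

theorem reflTransGen_graphAdj_of_reflTransGen (hVp : IsTypePartition Vp) {A B : Finset α}
    (h : ReflTransGen (TJStep P) A B) (hk : #A = k) :
    ReflTransGen (GraphAdj q Vp P k) (shapeOf q Vp A) (shapeOf q Vp B) := by
  induction h using ReflTransGen.head_induction_on with
  | refl => exact .refl
  | head hAC _ ih =>
    exact (reflTransGen_graphAdj_of_tjStep hVp hAC hk).trans (ih (hAC.card_eq ▸ hk))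

theorem ShapeAdj.exists_sig (hq : 1 ≤ q) (hVp : IsTypePartition Vp)
    {σ1 σ2 : Fin t → Option ℕ} (h : ShapeAdj q Vp k σ1 σ2) :
    ∃ (S1 S2 : Finset α) (i j : Fin t), #S1 = k ∧ shapeOf q Vp S1 = σ1 ∧
      shapeOf q Vp S2 = σ2 ∧ i ≠ j ∧ sig Vp S2 i < sig Vp S1 i ∧ sig Vp S1 j < sig Vp S2 j ∧
      ∀ h, σ1 h = σ2 h ∨ (h = i ∧ sig Vp S1 i = sig Vp S2 i + 1) ∨
        (h = j ∧ sig Vp S2 j = sig Vp S1 j + 1) := by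
  rcases h with ⟨i, j, hij, hdiff, hA, hB, ⟨S1, hk1, rfl, h1i, h1j⟩, ⟨S2, -, rfl, h2i, h2j⟩⟩ |
    ⟨i, hdiff, hA, ⟨S1, hk1, rfl, h1i, -⟩, ⟨S2, hk2, rfl, h2i, -⟩⟩ |
    ⟨j, hdiff, hB, ⟨S1, hk1, rfl, -, h1j⟩, ⟨S2, hk2, rfl, -, h2j⟩⟩
  · have hi := sig_eq_succ_of_acond hq hA (h1i i rfl) (h2i i rfl)
    have hj := sig_eq_succ_of_bcond hq hB (h1j j rfl) (h2j j rfl)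
    refine ⟨S1, S2, i, j, hk1, rfl, rfl, hij, by omega, by omega,
      fun h => or_iff_not_imp_left.2 fun hh => ?_⟩
    rcases (hdiff h).1 hh with rfl | rfl
    exacts [Or.inl ⟨rfl, hi⟩, Or.inr ⟨rfl, hj⟩]
  all_goals
    have hsum : ∑ h, sig Vp S1 h = ∑ h, sig Vp S2 h := by
      rw [← hVp.card_eq_sum_sig, ← hVp.card_eq_sum_sig, hk1, hk2]
  · have hi := sig_eq_succ_of_acond hq hA (h1i i rfl) (h2i i rfl)
    obtain ⟨j, hj⟩ := exists_lt_of_sum_eq_of_lt hsum (show sig Vp S2 i < sig Vp S1 i by omega)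
    exact ⟨S1, S2, i, j, hk1, rfl, rfl, by rintro rfl; omega, by omega, hj,
      fun h => or_iff_not_imp_left.2 fun hh => Or.inl ⟨(hdiff h).1 hh, hi⟩⟩
  · have hj := sig_eq_succ_of_bcond hq hB (h1j j rfl) (h2j j rfl)
    obtain ⟨i, hi⟩ := exists_lt_of_sum_eq_of_lt hsum.symm (show sig Vp S1 j < sig Vp S2 j by omega)
    exact ⟨S1, S2, i, j, hk1, rfl, rfl, by rintro rfl; omega, hi, by omega,
      fun h => or_iff_not_imp_left.2 fun hh => Or.inr ⟨(hdiff h).1 hh, hj⟩⟩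

theorem exists_tjStep_of_graphAdj (hq : 1 ≤ q) (hVp : IsTypePartition Vp)
    (hP : ShapeInvariant q Vp P) {σ1 σ2 : Fin t → Option ℕ} (h : GraphAdj q Vp P k σ1 σ2) :
    ∃ A B, TJStep P A B ∧ #A = k ∧ shapeOf q Vp A = σ1 ∧ shapeOf q Vp B = σ2 := by
  obtain ⟨-, ⟨X1, -, hX1, hPX1⟩, ⟨X2, -, hX2, hPX2⟩, hadj⟩ := h
  obtain ⟨A, C, i, j, hk, rfl, rfl, hij, hi, hj, hσ⟩ := hadj.exists_sig hq hVp
  obtain ⟨v, hv, hvi⟩ := exists_mem_sdiff_of_sig_lt hi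
  obtain ⟨w, hw, hwj⟩ := exists_mem_sdiff_of_sig_lt hj
  obtain ⟨B, hAB, hBA⟩ :=
    exists_sdiff_eq_singleton_and_sdiff_eq_singleton (mem_sdiff.1 hv).1 (mem_sdiff.1 hw).2
  have hsig := hVp.sig_add_ite_of_sdiff hAB hBA hvi hwj
  have hB : shapeOf q Vp B = shapeOf q Vp C := by
    refine shapeOf_eq_of_between
      (hVp.sig_between_of_sdiff hAB hBA hvi hwj (Or.inr ⟨hi, hj⟩)) fun h => ?_
    rcases hσ h with hh | ⟨rfl, hh⟩ | ⟨rfl, hh⟩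
    · exact Or.inl hh
    · have := hsig h
      simp only [if_true, hij, if_false] at this
      omega
    · have := hsig h
      simp only [if_true, hij.symm, if_false] at this
      omega
  exact ⟨A, B, ⟨(hP A X1 hX1.symm).2 hPX1, (hP B X2 (hB.trans hX2.symm)).2 hPX2,
    by simp [hAB], by simp [hBA]⟩, hk, rfl, hB⟩

theorem exists_sdiff_lt_of_shapeOf_eq (hVp : IsTypePartition Vp) {X Y : Finset α}
    (hc : #X = #Y) (hs : shapeOf q Vp X = shapeOf q Vp Y) (hne : X ≠ Y) :
    ∃ X', #(X \ X') = 1 ∧ #(X' \ X) = 1 ∧ #(X' \ Y) < #(X \ Y) ∧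
      shapeOf q Vp X' = shapeOf q Vp Y := by
  obtain ⟨v, hv⟩ : (X \ Y).Nonempty := by
    rw [nonempty_iff_ne_empty, Ne, sdiff_eq_empty_iff_subset]
    exact fun hXY => hne (eq_of_subset_of_card_le hXY hc.ge)
  obtain ⟨i, hvi⟩ := hVp.2.2 v
  obtain ⟨w, hw, j, hwj, hij⟩ : ∃ w ∈ Y \ X, ∃ j, w ∈ Vp j ∧
      (i = j ∨ sig Vp Y i < sig Vp X i ∧ sig Vp X j < sig Vp Y j) := by
    by_cases hle : sig Vp X i ≤ sig Vp Y i
    · obtain ⟨w, hw, hwi⟩ := exists_mem_sdiff_of_sig_le hle hv hvi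
      exact ⟨w, hw, i, hwi, Or.inl rfl⟩
    · have hsum : ∑ h, sig Vp X h = ∑ h, sig Vp Y h := by
        rw [← hVp.card_eq_sum_sig, ← hVp.card_eq_sum_sig, hc]
      obtain ⟨j, hj⟩ := exists_lt_of_sum_eq_of_lt hsum (not_le.1 hle)
      obtain ⟨w, hw, hwj⟩ := exists_mem_sdiff_of_sig_lt hj
      exact ⟨w, hw, j, hwj, Or.inr ⟨not_le.1 hle, hj⟩⟩
  obtain ⟨X', hXX', hX'X⟩ :=
    exists_sdiff_eq_singleton_and_sdiff_eq_singleton (mem_sdiff.1 hv).1 (mem_sdiff.1 hw).2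
  refine ⟨X', by simp [hXX'], by simp [hX'X], card_lt_card ?_,
    shapeOf_eq_of_between (hVp.sig_between_of_sdiff hXX' hX'X hvi hwj hij)
      fun h => Or.inl (congrFun hs h)⟩
  have hvX' : v ∉ X' := (mem_sdiff.1 (hXX' ▸ mem_singleton_self v)).2
  refine (ssubset_iff_of_subset fun x hx => ?_).2 ⟨v, hv, fun h => hvX' (mem_sdiff.1 h).1⟩
  rw [mem_sdiff] at hx ⊢
  refine ⟨by_contra fun hxX => hx.2 ?_, hx.2⟩
  have hxw : x ∈ X' \ X := mem_sdiff.2 ⟨hx.1, hxX⟩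
  rw [hX'X, mem_singleton] at hxw
  exact hxw ▸ (mem_sdiff.1 hw).1

theorem reflTransGen_tjStep_of_shapeOf_eq (hVp : IsTypePartition Vp)
    (hP : ShapeInvariant q Vp P) {X Y : Finset α} (hX : P X) (hc : #X = #Y)
    (hs : shapeOf q Vp X = shapeOf q Vp Y) : ReflTransGen (TJStep P) X Y := by
  induction hn : #(X \ Y) using Nat.strong_induction_on generalizing X with
  | _ n ih =>
    by_cases hXY : X = Y
    · exact hXY ▸ .refl
    obtain ⟨X', h1, h2, hlt, hs'⟩ := exists_sdiff_lt_of_shapeOf_eq hVp hc hs hXY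
    have hstep : TJStep P X X' := ⟨hX, (hP X' X (hs'.trans hs.symm)).2 hX, h1, h2⟩
    exact .head hstep (ih _ (hn ▸ hlt) hstep.2.1 (hstep.card_eq ▸ hc) hs' rfl)

theorem reflTransGen_tjStep_of_reflTransGen_graphAdj (hq : 1 ≤ q) (hVp : IsTypePartition Vp)
    (hP : ShapeInvariant q Vp P) {X Y : Finset α}
    (h : ReflTransGen (GraphAdj q Vp P k) (shapeOf q Vp X) (shapeOf q Vp Y))
    (hX : P X) (hkX : #X = k) (hkY : #Y = k) : ReflTransGen (TJStep P) X Y := by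
  generalize hσ : shapeOf q Vp X = σ at h
  induction h using ReflTransGen.head_induction_on generalizing X with
  | refl => exact reflTransGen_tjStep_of_shapeOf_eq hVp hP hX (hkX.trans hkY.symm) hσ
  | head hadj _ ih =>
    obtain ⟨A, B, hAB, hkA, hA, hB⟩ := exists_tjStep_of_graphAdj hq hVp hP hadj
    exact (reflTransGen_tjStep_of_shapeOf_eq hVp hP hX (hkX.trans hkA.symm)
      (hσ.trans hA.symm)).trans (.head hAB (ih hAB.2.1 (hAB.card_eq ▸ hkA) hB))

end Reconfiguration

theorem stmt2_general {t q : ℕ} (hq : 1 ≤ q) (Vp : Fin t → Finset α)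
    (hVp : IsTypePartition Vp) (P : Finset α → Prop) (hP : ShapeInvariant q Vp P)
    (k : ℕ) (S S' : Finset α) (hS : P S)
    (hkS : S.card = k) (hkS' : S'.card = k) :
    (∃ (seq : ℕ → Finset α) (ℓ : ℕ), TJSeq P seq ℓ S S') ↔
      Relation.ReflTransGen (GraphAdj q Vp P k)
        (shapeOf q Vp S) (shapeOf q Vp S') := by
  rw [exists_tjSeq_iff]
  exact ⟨fun ⟨_, h⟩ => reflTransGen_graphAdj_of_reflTransGen hVp h hkS,
    fun h => ⟨hS, reflTransGen_tjStep_of_reflTransGen_graphAdj hq hVp hP h hS hkS hkS'⟩⟩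

/-- For `S, S'` satisfying a shape-invariant predicate `P`, both of
cardinality `k` and both unions of types, there is a TJ(P)-sequence from `S` to `S'`
iff their shapes lie in the same connected component of the size-`k` shape graph
(i.e. are related by the reflexive–transitive closure of the adjacency relation). -/
theorem stmt2 {t q : ℕ} (hq : 1 ≤ q) (Vp : Fin t → Finset α)
    (hVp : IsTypePartition Vp) (P : Finset α → Prop) (hP : ShapeInvariant q Vp P)
    (k : ℕ) (S S' : Finset α) (hS : P S) (hS' : P S')
    (hkS : S.card = k) (hkS' : S'.card = k)
    (hUS : ∀ i : Fin t, Vp i ⊆ S ∨ Vp i ∩ S = ∅)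
    (hUS' : ∀ i : Fin t, Vp i ⊆ S' ∨ Vp i ∩ S' = ∅) :
    (∃ (seq : ℕ → Finset α) (ℓ : ℕ), TJSeq P seq ℓ S S') ↔
      Relation.ReflTransGen (GraphAdj q Vp P k)
        (shapeOf q Vp S) (shapeOf q Vp S') :=
  stmt2_general hq Vp hVp P hP k S S' hS hkS hkS'
end

section
/- Let S_1, S_2 ⊆ V with |S_1| = |S_2|, and let σ̄_1 and σ̄_2 be their shapes. Suppose σ̄_1 and σ̄_2 disagree at exactly one index i (that is, σ̄_1(i) ≠ σ̄_2(i) and σ̄_1(h) = σ̄_2(h) for all h ≠ i), and that |V_i ∩ S_1| > |V_i ∩ S_2|. Then there exists an index j ≠ i such that σ̄_1(j) = σ̄_2(j) = ⊤ and σ_{S_1}(j) < |V_j| − q. -/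
/-! Shapes framework: `V` is a finite type partitioned into types `Vp 0, …, Vp (t-1)`;
`q ≥ 1` is a fixed integer. A shape is a function `Fin t → Option ℕ`, where `none`
represents the symbol ⊤. -/

variable {α : Type*} [DecidableEq α] [Fintype α]

/-! Summing signatures over the partition gives `∑ⱼ σ_{S₁}(j) = |S₁| = |S₂| = ∑ⱼ σ_{S₂}(j)`, so
`σ_{S₁}(i) > σ_{S₂}(i)` forces `σ_{S₁}(j) < σ_{S₂}(j)` for some `j ≠ i`. At such a `j` the shapes
agree while the signatures differ, which is only possible if both shapes are `⊤`; hence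
`σ_{S₁}(j) < σ_{S₂}(j) ≤ |V_j| - q`. -/

open Finset

section

variable {V : Type*} [DecidableEq V] {t q : ℕ} {Vp : Fin t → Finset V}

theorem sum_sig_eq_card (hdisj : ∀ i j, i ≠ j → Disjoint (Vp i) (Vp j))
    (hcov : ∀ v : V, ∃ i, v ∈ Vp i) (X : Finset V) : ∑ k, sig Vp X k = X.card := by
  have hX : (univ.biUnion fun k => Vp k ∩ X) = X := by
    ext v
    simp only [mem_biUnion, mem_inter, mem_univ, true_and]
    exact ⟨fun ⟨_, _, hv⟩ => hv, fun hv => (hcov v).imp fun _ hk => ⟨hk, hv⟩⟩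
  conv_rhs => rw [← hX]
  exact (card_biUnion fun a _ b _ hab =>
    (hdisj a b hab).mono inter_subset_left inter_subset_left).symm

theorem exists_ne_sig_lt_of_card_eq (hdisj : ∀ i j, i ≠ j → Disjoint (Vp i) (Vp j))
    (hcov : ∀ v : V, ∃ i, v ∈ Vp i) {S1 S2 : Finset V} (hcard : S1.card = S2.card)
    {i : Fin t} (hgt : sig Vp S2 i < sig Vp S1 i) : ∃ j ≠ i, sig Vp S1 j < sig Vp S2 j := by
  have hsum := sum_sig_eq_card hdisj hcov S1
  rw [hcard, ← sum_sig_eq_card hdisj hcov S2, ← add_sum_erase _ _ (mem_univ i),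
    ← add_sum_erase _ _ (mem_univ i)] at hsum
  obtain ⟨j, hj, hlt⟩ := exists_lt_of_sum_lt (s := univ.erase i)
    (f := sig Vp S1) (g := sig Vp S2) (by omega)
  exact ⟨j, ne_of_mem_erase hj, hlt⟩

theorem shapeOf_eq_none_iff {X : Finset V} {j : Fin t} :
    shapeOf q Vp X j = none ↔ q ≤ sig Vp X j ∧ sig Vp X j ≤ (Vp j).card - q := by
  unfold shapeOf
  split_ifs with h <;> simp [h]

theorem sig_eq_of_shapeOf_eq_some {n : ℕ} {X : Finset V} {j : Fin t}
    (h : shapeOf q Vp X j = some n) : sig Vp X j = n := by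
  unfold shapeOf at h
  split_ifs at h
  exact Option.some_injective _ h

theorem shapeOf_eq_none_of_shapeOf_eq_of_sig_lt {X Y : Finset V} {j : Fin t}
    (hshape : shapeOf q Vp X j = shapeOf q Vp Y j) (hlt : sig Vp X j < sig Vp Y j) :
    shapeOf q Vp X j = none ∧ shapeOf q Vp Y j = none ∧ sig Vp X j < (Vp j).card - q := by
  cases hY : shapeOf q Vp Y j with
  | some n =>
    rw [hY] at hshape
    rw [sig_eq_of_shapeOf_eq_some hshape, sig_eq_of_shapeOf_eq_some hY] at hlt
    exact absurd hlt (lt_irrefl n)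
  | none =>
    exact ⟨hshape.trans hY, rfl, hlt.trans_le (shapeOf_eq_none_iff.mp hY).2⟩

end

theorem stmt6_general {t q : ℕ} (Vp : Fin t → Finset α)
    (hVp : IsTypePartition Vp) (S1 S2 : Finset α) (hcard : S1.card = S2.card)
    (i : Fin t)
    (hagr : ∀ h : Fin t, h ≠ i → shapeOf q Vp S1 h = shapeOf q Vp S2 h)
    (hgt : sig Vp S2 i < sig Vp S1 i) :
    ∃ j : Fin t, j ≠ i ∧ shapeOf q Vp S1 j = none ∧ shapeOf q Vp S2 j = none ∧
      sig Vp S1 j < (Vp j).card - q := by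
  obtain ⟨-, hdisj, hcov⟩ := hVp
  obtain ⟨j, hji, hlt⟩ := exists_ne_sig_lt_of_card_eq hdisj hcov hcard hgt
  exact ⟨j, hji, shapeOf_eq_none_of_shapeOf_eq_of_sig_lt (hagr j hji) hlt⟩

/-- If `S₁, S₂` have the same cardinality, their shapes disagree at
exactly one index `i`, and `|V_i ∩ S₁| > |V_i ∩ S₂|`, then there is an index `j ≠ i`
with `σ̄₁(j) = σ̄₂(j) = ⊤` and `σ_{S₁}(j) < |V_j| − q`. -/
theorem stmt6 {t q : ℕ} (hq : 1 ≤ q) (Vp : Fin t → Finset α)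
    (hVp : IsTypePartition Vp) (S1 S2 : Finset α) (hcard : S1.card = S2.card)
    (i : Fin t)
    (hdis : shapeOf q Vp S1 i ≠ shapeOf q Vp S2 i)
    (hagr : ∀ h : Fin t, h ≠ i → shapeOf q Vp S1 h = shapeOf q Vp S2 h)
    (hgt : sig Vp S2 i < sig Vp S1 i) :
    ∃ j : Fin t, j ≠ i ∧ shapeOf q Vp S1 j = none ∧ shapeOf q Vp S2 j = none ∧
      sig Vp S1 j < (Vp j).card - q :=
  stmt6_general Vp hVp S1 S2 hcard i hagr hgt
end
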